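/- arXiv:1208.2759 — 2 statements merged into one kernel-verified Lean document; each statement's English description precedes it below -/
import Mathlib

section
/- Let B be a finite alphabet and suppose ũ : ℤ² → {0,1} × B × {0,1} satisfies: the first coordinate of each row is a Sturmian word, i.e., π₁(ũ(m,·)) = s_{α,ρ_m} for each m; and for all (m,n), π₃(ũ(m,n)) < π₃(ũ(m,n+1)) implies π₁(ũ(m,n)) = 0, and π₃(ũ(m,n)) > π₃(ũ(m,n+1)) implies π₁(ũ(m,n)) = 1. Define π(ũ)(m,n) = π₁(ũ(m,n)) if π₃(ũ(m,n)) = π₃(ũ(m,n+1)), and 1 − π₁(ũ(m,n)) otherwise. Then for every m, d(π(ũ)(m,·), s_{α,ρ_m}) ≤ 1 in the balance metric. -/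
/-!
Write `b` for the third-coordinate bit sequence of a row and `u` for its Sturmian first
coordinate. The image word differs from `u` exactly where `b` changes, and the sign conditions
make the change `0 → 1` where `b` rises and `1 → 0` where `b` falls. Hence its zero-indicator
minus that of `u` is `b n - b (n + 1)`, and the sum over a window `[p, q]` telescopes to
`b p - b (q + 1) ∈ [-1, 1]`.
-/

/-- The Sturmian word of intercept `ρ` and slope `α`: letter `0` iff `(ρ + nα) mod 1 ∈ [0, 1-α)`. -/
noncomputable def sturm (ρ α : ℝ) (n : ℤ) : Fin 2 :=
  if Int.fract (ρ + n * α) < 1 - α then 0 else 1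

/-- Number of occurrences of the letter `0` in `u(p)…u(q)`. -/
noncomputable def zeroCount (u : ℤ → Fin 2) (p q : ℤ) : ℤ :=
  (((Finset.Icc p q).filter (fun i => u i = 0)).card : ℤ)

/-- The balance distance between `u` and `v` is at most one. -/
def distLE1 (u v : ℤ → Fin 2) : Prop :=
  ∀ p q : ℤ, p ≤ q → |zeroCount u p q - zeroCount v p q| ≤ 1

open Finset

theorem Finset.sum_Icc_sub_succ_int {G : Type*} [AddCommGroup G] (f : ℤ → G) {p q : ℤ}
    (hpq : p ≤ q) : ∑ n ∈ Icc p q, (f n - f (n + 1)) = f p - f (q + 1) := by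
  induction q, hpq using Int.leInduction with
  | base => simp
  | succ k hk ih =>
    rw [← insert_Icc_right_eq_Icc_add_one (by omega), sum_insert (by simp), ih]
    abel

theorem zeroCount_eq_sum (u : ℤ → Fin 2) (p q : ℤ) :
    zeroCount u p q = ∑ n ∈ Icc p q, if u n = 0 then (1 : ℤ) else 0 := by
  rw [zeroCount, card_filter]
  push_cast
  rfl

theorem distLE1_of_zero_indicator_sub_eq (u v : ℤ → Fin 2) (f : ℤ → ℤ)
    (hf : ∀ n, 0 ≤ f n ∧ f n ≤ 1)
    (h : ∀ n, ((if u n = 0 then 1 else 0) - if v n = 0 then 1 else 0) = f n - f (n + 1)) :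
    distLE1 u v := by
  intro p q hpq
  rw [zeroCount_eq_sum, zeroCount_eq_sum, ← sum_sub_distrib, sum_congr rfl fun n _ => h n,
    sum_Icc_sub_succ_int f hpq, abs_le]
  have := hf p
  have := hf (q + 1)
  constructor <;> linarith

theorem zero_indicator_replace_sub (x y z : Fin 2) (hup : x < y → z = 0) (hdown : y < x → z = 1) :
    ((if (if x = y then z else 1 - z) = 0 then 1 else 0) - if z = 0 then 1 else 0 : ℤ)
      = x.val - y.val := by
  revert x y z
  decide

theorem distLE1_replace_at_changes (b u : ℤ → Fin 2)
    (hup : ∀ n, b n < b (n + 1) → u n = 0) (hdown : ∀ n, b (n + 1) < b n → u n = 1) :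
    distLE1 (fun n => if b n = b (n + 1) then u n else 1 - u n) u :=
  distLE1_of_zero_indicator_sub_eq _ u (fun n => (b n).val)
    (fun n => ⟨by positivity, by have := (b n).isLt; omega⟩)
    (fun n => zero_indicator_replace_sub _ _ _ (hup n) (hdown n))

theorem factor_map_into_Zprime_general {B : Type*} (α : ℝ) (ρ : ℤ → ℝ)
    (ut : ℤ → ℤ → Fin 2 × B × Fin 2)
    (h1 : ∀ m n : ℤ, (ut m n).1 = sturm (ρ m) α n)
    (h2 : ∀ m n : ℤ, (ut m n).2.2 < (ut m (n + 1)).2.2 → (ut m n).1 = 0)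
    (h3 : ∀ m n : ℤ, (ut m (n + 1)).2.2 < (ut m n).2.2 → (ut m n).1 = 1) :
    ∀ m : ℤ,
      distLE1
        (fun n => if (ut m n).2.2 = (ut m (n + 1)).2.2 then (ut m n).1 else 1 - (ut m n).1)
        (sturm (ρ m) α) := by
  intro m
  have hrow : (fun n => (ut m n).1) = sturm (ρ m) α := funext (h1 m)
  rw [← hrow]
  exact distLE1_replace_at_changes (fun n => (ut m n).2.2) _ (h2 m) (h3 m)

/-- The factor map `π` sends `Z̃'_α` into `Z'_α`: every row of the image is at
balance distance at most one from the corresponding Sturmian word. -/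
theorem factor_map_into_Zprime {B : Type*} [Fintype B] (α : ℝ) (ρ : ℤ → ℝ)
    (ut : ℤ → ℤ → Fin 2 × B × Fin 2)
    (h1 : ∀ m n : ℤ, (ut m n).1 = sturm (ρ m) α n)
    (h2 : ∀ m n : ℤ, (ut m n).2.2 < (ut m (n + 1)).2.2 → (ut m n).1 = 0)
    (h3 : ∀ m n : ℤ, (ut m (n + 1)).2.2 < (ut m n).2.2 → (ut m n).1 = 1) :
    ∀ m : ℤ,
      distLE1
        (fun n => if (ut m n).2.2 = (ut m (n + 1)).2.2 then (ut m n).1 else 1 - (ut m n).1)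
        (sturm (ρ m) α) :=
  factor_map_into_Zprime_general α ρ ut h1 h2 h3
end

section
/- For irrational α ∈ (0,1), any word v : ℤ → {0,1} at balance distance at most 1 from the Sturmian word s_{0,α} (a quasi-Sturmian word of slope α) is non-periodic: there is no T ≥ 1 with v(n+T) = v(n) for all n ∈ ℤ. -/
/-!
A `T`-periodic word with `c` zeros in `u(0)…u(T-1)` has exactly `k c` zeros in its first `k T`
letters, while `s_{0,α}` has `k T (1 - α) + O(1)` of them, because its number of zeros in
`u(0)…u(M-1)` is `M - ⌊M α⌋`. Balance distance at most one thus gives `|k (c - T (1 - α))| ≤ 2`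
for all `k`, so `T α = T - c`, contradicting the irrationality of `α`.
-/

lemma Int.floor_add_eq_ite {x a : ℝ} (ha₀ : 0 ≤ a) (ha₁ : a < 1) :
    ⌊x + a⌋ = ⌊x⌋ + if Int.fract x < 1 - a then 0 else 1 := by
  conv_lhs => rw [← Int.floor_add_fract x, add_assoc, Int.floor_intCast_add]
  have := Int.fract_nonneg x
  have := Int.fract_lt_one x
  congr 1
  split_ifs with h <;> rw [Int.floor_eq_iff] <;> push_cast <;> constructor <;> linarith

lemma eq_zero_of_forall_abs_nat_mul_le {x C : ℝ} (h : ∀ k : ℕ, |k * x| ≤ C) : x = 0 := by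
  by_contra hx
  obtain ⟨k, hk⟩ := exists_nat_gt (C / |x|)
  have hCk := h k
  rw [div_lt_iff₀ (abs_pos.2 hx)] at hk
  rw [abs_mul, Nat.abs_cast] at hCk
  linarith

section zeroCount

variable (u : ℤ → Fin 2)

lemma zeroCount_of_lt {p q : ℤ} (h : q < p) : zeroCount u p q = 0 := by
  simp [zeroCount, Finset.Icc_eq_empty_of_lt h]

lemma zeroCount_self (q : ℤ) : zeroCount u q q = if u q = 0 then 1 else 0 := by
  unfold zeroCount
  rw [Finset.Icc_self, Finset.filter_singleton]
  split_ifs <;> simp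

lemma zeroCount_add_zeroCount {p r q : ℤ} (hpr : p ≤ r + 1) (hrq : r ≤ q) :
    zeroCount u p r + zeroCount u (r + 1) q = zeroCount u p q := by
  unfold zeroCount
  have hunion : Finset.Icc p q = Finset.Icc p r ∪ Finset.Icc (r + 1) q := by
    ext x; simp only [Finset.mem_Icc, Finset.mem_union]; omega
  have hdisj : Disjoint (Finset.Icc p r) (Finset.Icc (r + 1) q) := by
    rw [Finset.disjoint_left]; intro x hx hx'; simp only [Finset.mem_Icc] at hx hx'; omega
  rw [hunion, Finset.filter_union,
    Finset.card_union_of_disjoint (Finset.disjoint_filter_filter hdisj), Nat.cast_add]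

lemma zeroCount_add_one {p q : ℤ} (h : p ≤ q + 1) :
    zeroCount u p (q + 1) = zeroCount u p q + if u (q + 1) = 0 then 1 else 0 := by
  rw [← zeroCount_self, zeroCount_add_zeroCount u h (by omega)]

lemma zeroCount_add_right (p q S : ℤ) :
    zeroCount u (p + S) (q + S) = zeroCount (fun n => u (n + S)) p q := by
  unfold zeroCount
  rw [← Finset.map_add_right_Icc, Finset.filter_map, Finset.card_map]
  rfl

lemma Function.Periodic.zeroCount_mul_sub_one {T : ℤ} (hu : Function.Periodic u T)
    (hT : 0 ≤ T) (k : ℕ) : zeroCount u 0 (k * T - 1) = k * zeroCount u 0 (T - 1) := by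
  induction k with
  | zero => simp [zeroCount_of_lt]
  | succ k ih =>
    have hshift : (fun n => u (n + k * T)) = u := funext (hu.nat_mul k)
    have hk : (0 : ℤ) ≤ k * T := by positivity
    rw [← zeroCount_add_zeroCount u (r := k * T - 1) (by omega) (by push_cast; nlinarith), ih,
      show k * T - 1 + 1 = 0 + k * T by ring, show ((k + 1 : ℕ) : ℤ) * T - 1 = T - 1 + k * T by
        push_cast; ring, zeroCount_add_right, hshift]
    push_cast; ring

lemma distLE1.abs_zeroCount_sub_le {v : ℤ → Fin 2} (h : distLE1 u v) (p q : ℤ) :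
    |zeroCount u p q - zeroCount v p q| ≤ 1 := by
  rcases le_or_gt p q with hpq | hqp
  · exact h p q hpq
  · simp [zeroCount_of_lt _ hqp]

end zeroCount

section sturm

variable {α : ℝ} (ρ : ℝ)

lemma zeroCount_sturm (hα₀ : 0 ≤ α) (hα₁ : α < 1) (M : ℕ) :
    zeroCount (sturm ρ α) 0 (M - 1) = M - (⌊ρ + M * α⌋ - ⌊ρ⌋) := by
  induction M with
  | zero => simp [zeroCount_of_lt]
  | succ M ih =>
    rw [show ((M + 1 : ℕ) : ℤ) - 1 = M - 1 + 1 by push_cast; ring,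
      zeroCount_add_one _ (by omega), ih, sub_add_cancel, sturm]
    push_cast
    rw [show ρ + (M + 1) * α = ρ + M * α + α by ring, Int.floor_add_eq_ite hα₀ hα₁]
    split_ifs <;> simp_all <;> ring

lemma abs_zeroCount_sturm_sub_le (hα₀ : 0 ≤ α) (hα₁ : α < 1) (M : ℕ) :
    |(zeroCount (sturm ρ α) 0 (M - 1) : ℝ) - M * (1 - α)| ≤ 1 := by
  rw [zeroCount_sturm ρ hα₀ hα₁ M]
  push_cast
  rw [show (M : ℝ) - (⌊ρ + M * α⌋ - ⌊ρ⌋) - M * (1 - α) = Int.fract (ρ + M * α) - Int.fract ρ by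
    unfold Int.fract; ring]
  rw [abs_le]
  constructor <;> linarith [Int.fract_nonneg ρ, Int.fract_lt_one ρ,
    Int.fract_nonneg (ρ + M * α), Int.fract_lt_one (ρ + M * α)]

end sturm

/-- Any quasi-Sturmian word of irrational slope `α` is non-periodic. -/
theorem quasiSturmian_not_periodic (α : ℝ) (hirr : Irrational α)
    (hα : α ∈ Set.Ioo (0:ℝ) 1) (v : ℤ → Fin 2) (hv : distLE1 v (sturm 0 α)) :
    ¬ ∃ T : ℤ, 1 ≤ T ∧ ∀ n : ℤ, v (n + T) = v n := by
  rintro ⟨T, hT, hper⟩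
  lift T to ℕ using by omega
  set c := zeroCount v 0 (T - 1)
  have hfreq : (c : ℝ) - T * (1 - α) = 0 := by
    refine eq_zero_of_forall_abs_nat_mul_le (C := 2) fun k => ?_
    have hcount := hv.abs_zeroCount_sub_le _ 0 ((k * T : ℕ) - 1)
    rw [Nat.cast_mul, Function.Periodic.zeroCount_mul_sub_one v hper (by positivity)] at hcount
    have hbal : |(k * c : ℝ) - zeroCount (sturm 0 α) 0 (k * T - 1)| ≤ 1 := by
      exact_mod_cast hcount
    have hsturm := abs_zeroCount_sturm_sub_le 0 hα.1.le hα.2 (k * T)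
    push_cast at hsturm
    calc |k * ((c : ℝ) - T * (1 - α))| ≤ |(k * c : ℝ) - zeroCount (sturm 0 α) 0 (k * T - 1)|
          + |(zeroCount (sturm 0 α) 0 (k * T - 1) : ℝ) - k * T * (1 - α)| := by
            rw [mul_sub, ← mul_assoc]; exact abs_sub_le _ _ _
      _ ≤ 2 := by linarith
  exact (hirr.natCast_mul (by omega : T ≠ 0)).ne_int (T - c) (by push_cast; linarith)
end
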